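/- arXiv:math/0512081 — 3 statements merged into one kernel-verified Lean document; each statement's English description precedes it below -/
import Mathlib

section
/- Let 0 < ρ_k ≤ ρ_l be real numbers. For each integer n with ⌊ρ_k n⌋ ≥ 1, set q_k := ⌊ρ_k n⌋, q_l := ⌊ρ_l n⌋ and u_n := (1/n²) · log( π^{q_k q_l} / ( ∏_{j=1}^{q_k} j! · ∏_{j=q_l−q_k}^{q_l−1} j! ) ) + ρ_k ρ_l · log n. Then u_n converges as n → ∞ to ρ_k ρ_l (log π + 1 − log ρ_k) + ρ_k²/4 − ρ_k² · ∫_{ρ_l/ρ_k − 1}^{ρ_l/ρ_k} t · log t dt. -/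
open Filter Real Finset

noncomputable def Fi (x : ℝ) : ℝ := x ^ 2 / 2 * Real.log x - x ^ 2 / 4

lemma Fi_zero : Fi 0 = 0 := by simp [Fi]

lemma hasDerivAt_Fi (x : ℝ) : HasDerivAt Fi (x * Real.log x) x := by
  rcases eq_or_ne x 0 with rfl | hx
  · rw [hasDerivAt_iff_tendsto_slope]
    have h2 : Tendsto (fun y : ℝ => y * Real.log y / 2 - y / 4) (nhdsWithin 0 {(0:ℝ)}ᶜ) (nhds 0) := by
      have hc : Continuous (fun y : ℝ => y * Real.log y / 2 - y / 4) :=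
        (Real.continuous_mul_log.div_const 2).sub (continuous_id.div_const 4)
      have := hc.tendsto 0
      simp only [Real.log_zero, mul_zero, zero_mul, zero_div, sub_zero, zero_sub, neg_zero] at this
      simpa using this.mono_left nhdsWithin_le_nhds
    rw [show (0:ℝ) * Real.log 0 = 0 by simp]
    refine h2.congr' ?_
    filter_upwards [self_mem_nhdsWithin] with y hy
    have hy' : y ≠ 0 := hy
    rw [slope_def_field, Fi, Fi_zero]
    field_simp
    ring
  · have h1 : HasDerivAt (fun y : ℝ => y ^ 2 / 2 * Real.log y)
        (x * Real.log x + x ^ 2 / 2 * x⁻¹) x := by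
      exact ((hasDerivAt_pow 2 x).div_const 2).mul (Real.hasDerivAt_log hx) |>.congr_deriv (by ring_nf)
    have h2 : HasDerivAt (fun y : ℝ => y ^ 2 / 4) (x / 2) x := by
      simpa using (hasDerivAt_pow 2 x).div_const 4 |>.congr_deriv (by ring)
    have := h1.sub h2
    refine this.congr_deriv ?_
    field_simp
    ring

lemma integral_mul_log (a b : ℝ) : ∫ t in a..b, t * Real.log t = Fi b - Fi a :=
  intervalIntegral.integral_eq_sub_of_hasDerivAt (fun t _ => hasDerivAt_Fi t)
    (Real.continuous_mul_log.intervalIntegrable a b)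

lemma step_upper (j : ℕ) (hj : 1 ≤ j) : (j:ℝ) * Real.log j ≤ Fi ((j:ℝ)+1) - Fi j := by
  rw [← integral_mul_log]
  have h0 : (j:ℝ) * Real.log j = ∫ _t in (j:ℝ)..((j:ℝ)+1), (j:ℝ) * Real.log j := by simp
  rw [h0]
  apply intervalIntegral.integral_mono_on (by linarith)
    intervalIntegrable_const (Real.continuous_mul_log.intervalIntegrable _ _)
  intro t ht
  obtain ⟨ht1, ht2⟩ := ht
  have hj1 : (1:ℝ) ≤ (j:ℝ) := by exact_mod_cast hj
  have hlj : 0 ≤ Real.log j := Real.log_nonneg hj1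
  have hlt : Real.log j ≤ Real.log t := Real.log_le_log (by linarith) ht1
  nlinarith

lemma step_lower (j : ℕ) (hj : 1 ≤ j) : Fi j - Fi ((j:ℝ)-1) ≤ (j:ℝ) * Real.log j := by
  rcases eq_or_lt_of_le hj with h1 | h2
  · rw [← h1]; norm_num [Fi]
  · have hj2 : (2:ℝ) ≤ (j:ℝ) := by exact_mod_cast h2
    rw [← integral_mul_log]
    have h0 : (j:ℝ) * Real.log j = ∫ _t in ((j:ℝ)-1)..(j:ℝ), (j:ℝ) * Real.log j := by simp
    rw [h0]
    apply intervalIntegral.integral_mono_on (by linarith)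
      (Real.continuous_mul_log.intervalIntegrable _ _) intervalIntegrable_const
    intro t ht
    obtain ⟨ht1, ht2⟩ := ht
    have hlt : Real.log t ≤ Real.log j := Real.log_le_log (by linarith) ht2
    have hlt0 : 0 ≤ Real.log t := Real.log_nonneg (by linarith)
    nlinarith

lemma T_lower (m : ℕ) : Fi m ≤ ∑ j ∈ Icc 1 m, (j:ℝ) * Real.log j := by
  induction m with
  | zero => simp [Fi]
  | succ m ih =>
      rw [Finset.sum_Icc_succ_top (Nat.one_le_iff_ne_zero.mpr (Nat.succ_ne_zero m))]
      have h := step_lower (m+1) (Nat.le_add_left 1 m)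
      push_cast at h ⊢
      have h' : ((m:ℝ) + 1 - 1) = m := by ring
      rw [h'] at h
      linarith

lemma T_upper (m : ℕ) : ∑ j ∈ Icc 1 m, (j:ℝ) * Real.log j ≤ Fi ((m:ℝ)+1) + 1/4 := by
  have h14 : Fi 1 = -(1/4) := by norm_num [Fi]
  induction m with
  | zero => norm_num [Fi]
  | succ m ih =>
      rw [Finset.sum_Icc_succ_top (Nat.one_le_iff_ne_zero.mpr (Nat.succ_ne_zero m))]
      have h := step_upper (m+1) (Nat.le_add_left 1 m)
      push_cast at h ⊢
      linarith

lemma logfac_lower (j : ℕ) : (j:ℝ) * Real.log j - j ≤ Real.log (Nat.factorial j) := by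
  induction j with
  | zero => simp
  | succ j ih =>
      have hfact : ((Nat.factorial (j+1) : ℕ) : ℝ) = ((j:ℝ)+1) * (Nat.factorial j : ℝ) := by
        rw [Nat.factorial_succ]; push_cast; ring
      rw [hfact, Real.log_mul (by positivity) (by exact_mod_cast (Nat.factorial_pos j).ne')]
      have key : (j:ℝ) * (Real.log ((j:ℝ)+1) - Real.log j) ≤ 1 := by
        rcases Nat.eq_zero_or_pos j with rfl | hj
        · norm_num
        · have hj0 : (0:ℝ) < j := by exact_mod_cast hj
          have h := Real.log_le_sub_one_of_pos (x := ((j:ℝ)+1)/j) (by positivity)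
          rw [Real.log_div (by positivity) (by positivity)] at h
          have h2 : ((j:ℝ)+1)/j - 1 = 1/j := by field_simp; ring
          rw [h2] at h
          calc (j:ℝ) * (Real.log ((j:ℝ)+1) - Real.log j) ≤ (j:ℝ) * (1/j) := by
                apply mul_le_mul_of_nonneg_left h hj0.le
            _ = 1 := by field_simp
      push_cast
      linarith

lemma logfac_upper (j : ℕ) (hj : 1 ≤ j) :
    Real.log (Nat.factorial j) ≤ (j:ℝ) * Real.log j - j + 1 + Real.log j := by
  induction j, hj using Nat.le_induction with
  | base => simp
  | succ j hj ih =>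
      have hfact : ((Nat.factorial (j+1) : ℕ) : ℝ) = ((j:ℝ)+1) * (Nat.factorial j : ℝ) := by
        rw [Nat.factorial_succ]; push_cast; ring
      rw [hfact, Real.log_mul (by positivity) (by exact_mod_cast (Nat.factorial_pos j).ne')]
      have hj0 : (0:ℝ) < j := by exact_mod_cast hj
      have key : 1 ≤ ((j:ℝ)+1) * (Real.log ((j:ℝ)+1) - Real.log j) := by
        have h := Real.one_sub_inv_le_log_of_pos (x := ((j:ℝ)+1)/j) (by positivity)
        rw [Real.log_div (by positivity) (by positivity)] at h
        have h2 : 1 - (((j:ℝ)+1)/j)⁻¹ = 1/((j:ℝ)+1) := by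
          rw [inv_div]; field_simp; ring
        rw [h2] at h
        calc (1:ℝ) = ((j:ℝ)+1) * (1/((j:ℝ)+1)) := by field_simp
          _ ≤ ((j:ℝ)+1) * (Real.log ((j:ℝ)+1) - Real.log j) := by
              apply mul_le_mul_of_nonneg_left h (by positivity)
      push_cast
      linarith

noncomputable def El (m : ℕ) : ℝ := ∑ j ∈ Icc 1 m, Real.log (Nat.factorial j)

lemma tendsto_log_div : Tendsto (fun n : ℕ => Real.log n / n) atTop (nhds 0) :=
  (Real.isLittleO_log_id_atTop.tendsto_div_nhds_zero).comp tendsto_natCast_atTop_atTop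

lemma ratio_lim {c K : ℝ} {a : ℕ → ℕ} (ha : ∀ᶠ n in atTop, |(a n : ℝ) - c * n| ≤ K) :
    Tendsto (fun n : ℕ => (a n : ℝ) / n) atTop (nhds c) := by
  have h : Tendsto (fun n : ℕ => (a n : ℝ) / n - c) atTop (nhds 0) := by
    apply squeeze_zero_norm' (a := fun n : ℕ => K / n)
    · filter_upwards [ha, eventually_ge_atTop 1] with n hn hn1
      have hn0 : (0:ℝ) < n := by exact_mod_cast hn1
      rw [Real.norm_eq_abs]
      have h2 : (a n : ℝ) / n - c = ((a n : ℝ) - c * n) / n := by field_simp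
      rw [h2, abs_div, abs_of_pos hn0]
      exact div_le_div_of_nonneg_right hn hn0.le
    · exact tendsto_const_div_atTop_nhds_zero_nat K
  have := h.add (tendsto_const_nhds (x := c))
  simpa using this

/-- Key sub-limit for `Fi`. -/
lemma F_lim {c K : ℝ} (hc : 0 ≤ c) {a : ℕ → ℕ}
    (ha : ∀ᶠ n in atTop, |(a n : ℝ) - c * n| ≤ K) :
    Tendsto (fun n : ℕ => (1/(n:ℝ)^2) * Fi (a n) - c^2/2 * Real.log n) atTop
      (nhds (c^2/2 * Real.log c - c^2/4)) := by
  set x : ℕ → ℝ := fun n => (a n : ℝ) / n with hx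
  have hxl : Tendsto x atTop (nhds c) := ratio_lim ha
  -- continuous part
  have hφ : Continuous (fun y : ℝ => y * (y * Real.log y) / 2 - y^2/4) :=
    ((continuous_id.mul Real.continuous_mul_log).div_const 2).sub
      ((continuous_pow 2).div_const 4)
  have h1 : Tendsto (fun n => x n * (x n * Real.log (x n)) / 2 - (x n)^2/4) atTop
      (nhds (c * (c * Real.log c) / 2 - c^2/4)) := (hφ.tendsto c).comp hxl
  -- log n correction part
  have h2 : Tendsto (fun n : ℕ => ((x n)^2 - c^2)/2 * Real.log n) atTop (nhds 0) := by
    apply squeeze_zero_norm' (a := fun n : ℕ => (K * (2*c+1)/2) * (Real.log n / n))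
    · have hev : ∀ᶠ n in atTop, |x n - c| ≤ 1 := by
        have := hxl (Metric.closedBall_mem_nhds c one_pos)
        simpa [Metric.mem_closedBall, Real.dist_eq] using this
      filter_upwards [ha, hev, eventually_ge_atTop 1] with n hn hev1 hn1
      have hn0 : (0:ℝ) < n := by exact_mod_cast hn1
      have hlogn : 0 ≤ Real.log n := Real.log_nonneg (by exact_mod_cast hn1)
      have hxc : |x n - c| ≤ K / n := by
        have h2 : x n - c = ((a n : ℝ) - c * n) / n := by rw [hx]; field_simp
        rw [h2, abs_div, abs_of_pos hn0]
        exact div_le_div_of_nonneg_right hn hn0.le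
      have hxpc : |x n + c| ≤ 2*c + 1 := by
        have := abs_le.mp hev1
        rw [abs_le]; constructor <;> nlinarith
      rw [Real.norm_eq_abs, abs_mul, abs_div, abs_of_nonneg hlogn,
        show |(2:ℝ)| = 2 by norm_num]
      have : |(x n)^2 - c^2| = |x n - c| * |x n + c| := by
        rw [← abs_mul]; ring_nf
      rw [this]
      have hKn : 0 ≤ K / n := le_trans (abs_nonneg _) hxc
      calc |x n - c| * |x n + c| / 2 * Real.log n
          ≤ (K/n) * (2*c+1) / 2 * Real.log n := by
            apply mul_le_mul_of_nonneg_right _ hlogn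
            apply div_le_div_of_nonneg_right _ (by norm_num)
            exact mul_le_mul hxc hxpc (abs_nonneg _) hKn
        _ = K * (2*c+1)/2 * (Real.log n / n) := by field_simp
    · simpa using tendsto_log_div.const_mul (K * (2*c+1)/2)
  -- pointwise identity
  have heq : ∀ᶠ n in atTop, (x n * (x n * Real.log (x n)) / 2 - (x n)^2/4)
      + ((x n)^2 - c^2)/2 * Real.log n
      = (1/(n:ℝ)^2) * Fi (a n) - c^2/2 * Real.log n := by
    filter_upwards [eventually_ge_atTop 1] with n hn1
    have hn0 : (0:ℝ) < n := by exact_mod_cast hn1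
    rcases Nat.eq_zero_or_pos (a n) with h0 | hpos
    · simp only [hx, h0, Nat.cast_zero, zero_div, Real.log_zero, Fi]
      norm_num
      ring
    · have ha0 : (0:ℝ) < a n := by exact_mod_cast hpos
      have hlx : Real.log (x n) = Real.log (a n) - Real.log n :=
        Real.log_div ha0.ne' hn0.ne'
      rw [hx] at hlx ⊢
      simp only [Fi, hlx]
      field_simp
      ring
  have := (h1.add h2).congr' heq
  convert this using 2
  ring

lemma sum_Icc_cast (m : ℕ) : ∑ j ∈ Icc 1 m, (j:ℝ) = m*(m+1)/2 := by
  induction m with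
  | zero => simp
  | succ m ih =>
      rw [Finset.sum_Icc_succ_top (Nat.one_le_iff_ne_zero.mpr (Nat.succ_ne_zero m)), ih]
      push_cast; ring

lemma main_lim {c K : ℝ} (hc : 0 ≤ c) {m : ℕ → ℕ}
    (hm : ∀ᶠ n in atTop, |(m n : ℝ) - c * n| ≤ K) :
    Tendsto (fun n : ℕ => (1/(n:ℝ)^2) * El (m n) - c^2/2 * Real.log n) atTop
      (nhds (c^2/2 * Real.log c - 3*c^2/4)) := by
  -- T part limit via squeeze
  have hm' : ∀ᶠ n in atTop, |((m n + 1 : ℕ) : ℝ) - c * n| ≤ K + 1 := by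
    filter_upwards [hm] with n hn
    have := abs_le.mp hn
    rw [abs_le]; push_cast
    constructor <;> linarith
  have hlow := F_lim hc hm
  have hup0 := F_lim hc hm'
  have hup : Tendsto (fun n : ℕ => (1/(n:ℝ)^2) * (Fi ((m n : ℝ) + 1) + 1/4)
      - c^2/2 * Real.log n) atTop (nhds (c^2/2 * Real.log c - c^2/4)) := by
    have hq : Tendsto (fun n : ℕ => (1/(n:ℝ)^2) * (1/4)) atTop (nhds 0) := by
      have : Tendsto (fun n : ℕ => (n:ℝ)^2) atTop atTop :=
        (tendsto_pow_atTop (by norm_num)).comp tendsto_natCast_atTop_atTop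
      simpa [one_div] using (this.inv_tendsto_atTop).mul_const ((1:ℝ)/4)
    have := hup0.add hq
    rw [add_zero] at this
    apply this.congr
    intro n
    push_cast
    ring
  have hT : Tendsto (fun n : ℕ =>
      (1/(n:ℝ)^2) * (∑ j ∈ Icc 1 (m n), (j:ℝ) * Real.log j) - c^2/2 * Real.log n) atTop
      (nhds (c^2/2 * Real.log c - c^2/4)) := by
    apply tendsto_of_tendsto_of_tendsto_of_le_of_le' hlow hup
    · filter_upwards [eventually_ge_atTop 1] with n hn1
      have hn2 : (0:ℝ) ≤ 1/(n:ℝ)^2 := by positivity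
      have := T_lower (m n)
      nlinarith [mul_le_mul_of_nonneg_left this hn2]
    · filter_upwards [eventually_ge_atTop 1] with n hn1
      have hn2 : (0:ℝ) ≤ 1/(n:ℝ)^2 := by positivity
      have := T_upper (m n)
      nlinarith [mul_le_mul_of_nonneg_left this hn2]
  -- S part
  have hxl := ratio_lim hm
  have h1n : Tendsto (fun n : ℕ => (1:ℝ)/n) atTop (nhds 0) :=
    tendsto_one_div_atTop_nhds_zero_nat
  have hS : Tendsto (fun n : ℕ => (1/(n:ℝ)^2) * (∑ j ∈ Icc 1 (m n), (j:ℝ))) atTop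
      (nhds (c^2/2)) := by
    have h := (hxl.mul (hxl.add h1n)).div_const 2
    rw [show c * (c + 0) / 2 = c^2/2 by ring] at h
    apply h.congr'
    filter_upwards [eventually_ge_atTop 1] with n hn1
    have hn0 : ((n:ℝ)) ≠ 0 := by positivity
    rw [sum_Icc_cast]
    field_simp
  -- R part
  have hR : Tendsto (fun n : ℕ =>
      (1/(n:ℝ)^2) * (∑ j ∈ Icc 1 (m n), (Real.log (Nat.factorial j) - (j:ℝ)*Real.log j + j)))
      atTop (nhds 0) := by
    apply squeeze_zero'
      (g := fun n : ℕ => (c+1)*(1+Real.log (c+1))/n + (c+1)*(Real.log n / n))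
    · filter_upwards [eventually_ge_atTop 1] with n hn1
      have hn2 : (0:ℝ) ≤ 1/(n:ℝ)^2 := by positivity
      apply mul_nonneg hn2
      apply Finset.sum_nonneg
      intro j hj
      have := logfac_lower j
      linarith
    · have hKn : ∀ᶠ n : ℕ in atTop, K ≤ n := by
        exact tendsto_natCast_atTop_atTop.eventually_ge_atTop K
      filter_upwards [hm, hKn, eventually_ge_atTop 1] with n hn hKn1 hn1
      have hn0 : (0:ℝ) < n := by exact_mod_cast hn1
      have hmle : (m n : ℝ) ≤ (c+1)*n := by
        have := abs_le.mp hn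
        nlinarith
      have l2 : (0:ℝ) ≤ Real.log n := Real.log_nonneg (by exact_mod_cast hn1)
      have l1 : (0:ℝ) ≤ Real.log (c+1) := Real.log_nonneg (by linarith)
      rcases Nat.eq_zero_or_pos (m n) with h0 | hpos
      · rw [h0]
        rw [show (Icc 1 0 : Finset ℕ) = ∅ from rfl, Finset.sum_empty, mul_zero]
        have hb1 : (0:ℝ) ≤ (c+1)*(1+Real.log (c+1))/n :=
          div_nonneg (mul_nonneg (by linarith) (by linarith)) hn0.le
        have hb2 : (0:ℝ) ≤ (c+1)*(Real.log n / n) :=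
          mul_nonneg (by linarith) (div_nonneg l2 hn0.le)
        linarith
      · have h1m : (0:ℝ) < m n := by exact_mod_cast hpos
        have hlogm : Real.log (m n) ≤ Real.log (c+1) + Real.log n := by
          rw [← Real.log_mul (by linarith : c+1 ≠ 0) hn0.ne']
          exact Real.log_le_log h1m hmle
        have hterm : ∀ j ∈ Icc 1 (m n),
            Real.log (Nat.factorial j) - (j:ℝ)*Real.log j + j
              ≤ 1 + Real.log (c+1) + Real.log n := by
          intro j hj
          obtain ⟨hj1, hj2⟩ := Finset.mem_Icc.mp hj
          have h1 := logfac_upper j hj1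
          have hlj : Real.log j ≤ Real.log (m n) :=
            Real.log_le_log (by exact_mod_cast hj1) (by exact_mod_cast hj2)
          linarith
        have hsum := Finset.sum_le_card_nsmul _ _ _ hterm
        rw [Nat.card_Icc, nsmul_eq_mul] at hsum
        have hcard : ((m n + 1 - 1 : ℕ) : ℝ) = (m n : ℝ) := by simp
        rw [hcard] at hsum
        have hn2 : (0:ℝ) ≤ 1/(n:ℝ)^2 := by positivity
        calc (1/(n:ℝ)^2) * ∑ j ∈ Icc 1 (m n),
              (Real.log (Nat.factorial j) - (j:ℝ)*Real.log j + j)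
            ≤ (1/(n:ℝ)^2) * ((m n : ℝ) * (1 + Real.log (c+1) + Real.log n)) :=
              mul_le_mul_of_nonneg_left hsum hn2
          _ ≤ (1/(n:ℝ)^2) * (((c+1)*n) * (1 + Real.log (c+1) + Real.log n)) := by
              apply mul_le_mul_of_nonneg_left _ hn2
              apply mul_le_mul_of_nonneg_right hmle (by linarith)
          _ = (c+1)*(1+Real.log (c+1))/n + (c+1)*(Real.log n / n) := by
              field_simp
    · have g1 : Tendsto (fun n : ℕ => (c+1)*(1+Real.log (c+1))/n) atTop (nhds 0) :=
        tendsto_const_div_atTop_nhds_zero_nat _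
      have g2 : Tendsto (fun n : ℕ => (c+1)*(Real.log n / n)) atTop (nhds 0) := by
        simpa using tendsto_log_div.const_mul (c+1)
      simpa using g1.add g2
  -- combine
  have hdecomp : ∀ M : ℕ, El M = (∑ j ∈ Icc 1 M, (j:ℝ)*Real.log j)
      - (∑ j ∈ Icc 1 M, (j:ℝ))
      + ∑ j ∈ Icc 1 M, (Real.log (Nat.factorial j) - (j:ℝ)*Real.log j + j) := by
    intro M
    rw [El, ← Finset.sum_sub_distrib, ← Finset.sum_add_distrib]
    apply Finset.sum_congr rfl
    intros; ring
  have final := (hT.sub hS).add hR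
  rw [add_zero] at final
  have : Tendsto (fun n : ℕ => (1/(n:ℝ)^2) * El (m n) - c^2/2 * Real.log n) atTop
      (nhds (c ^ 2 / 2 * Real.log c - c ^ 2 / 4 - c ^ 2 / 2)) := by
    apply final.congr
    intro n
    rw [hdecomp (m n)]
    ring
  convert this using 2
  ring

lemma sumIcc_fac (a b : ℕ) (h : a ≤ b + 1) :
    ∑ j ∈ Icc a b, Real.log (Nat.factorial j) = El b - El (a - 1) := by
  cases a with
  | zero =>
      have hsub : (Icc 1 b : Finset ℕ) ⊆ Icc 0 b := by
        intro j hj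
        simp only [Finset.mem_Icc] at *
        omega
      have h0 : ∑ j ∈ Icc 0 b, Real.log (Nat.factorial j)
          = ∑ j ∈ Icc 1 b, Real.log (Nat.factorial j) := by
        refine (Finset.sum_subset hsub ?_).symm
        intro j hj hj'
        simp only [Finset.mem_Icc] at hj hj'
        have : j = 0 := by omega
        simp [this]
      simp [h0, El]
  | succ a' =>
      have h' : a' ≤ b := by omega
      have key := Finset.sum_Ioc_consecutive (fun j => Real.log (Nat.factorial j))
        (Nat.zero_le a') h'
      simp only [El, Nat.succ_sub_one]
      rw [show (Icc (a'+1) b : Finset ℕ) = Ioc a' b from Finset.Icc_add_one_left_eq_Ioc a' b,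
        show (Icc 1 b : Finset ℕ) = Ioc 0 b from Finset.Icc_add_one_left_eq_Ioc 0 b,
        show (Icc 1 a' : Finset ℕ) = Ioc 0 a' from Finset.Icc_add_one_left_eq_Ioc 0 a']
      linarith


/-- Asymptotics of the normalizing constants: with `q_k = ⌊ρ_k n⌋`,
`q_l = ⌊ρ_l n⌋`,
`u_n = n⁻² log( π^{q_k q_l} / (∏_{j=1}^{q_k} j! ∏_{j=q_l-q_k}^{q_l-1} j!) ) + ρ_k ρ_l log n`
converges to
`ρ_k ρ_l (log π + 1 - log ρ_k) + ρ_k²/4 - ρ_k² ∫_{ρ_l/ρ_k - 1}^{ρ_l/ρ_k} t log t dt`. -/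
theorem stmt1 (ρk ρl : ℝ) (hk : 0 < ρk) (hkl : ρk ≤ ρl) :
    Tendsto
      (fun n : ℕ =>
        (1 / (n : ℝ) ^ 2) *
            Real.log ((Real.pi ^ (Nat.floor (ρk * n) * Nat.floor (ρl * n)) :) /
              ((∏ j ∈ Finset.Icc 1 (Nat.floor (ρk * n)), (j.factorial : ℝ)) *
                ∏ j ∈ Finset.Icc (Nat.floor (ρl * n) - Nat.floor (ρk * n))
                    (Nat.floor (ρl * n) - 1), (j.factorial : ℝ))) +
          ρk * ρl * Real.log n)
      atTop
      (nhds (ρk * ρl * (Real.log Real.pi + 1 - Real.log ρk) + ρk ^ 2 / 4 -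
        ρk ^ 2 * ∫ t in (ρl / ρk - 1)..(ρl / ρk), t * Real.log t)) := by

  have hl : 0 < ρl := lt_of_lt_of_le hk hkl
  set qk : ℕ → ℕ := fun n => Nat.floor (ρk * n) with hqk
  set ql : ℕ → ℕ := fun n => Nat.floor (ρl * n) with hql
  -- basic floor facts
  have hflk : ∀ n : ℕ, (qk n : ℝ) ≤ ρk * n ∧ ρk * n < qk n + 1 := fun n =>
    ⟨Nat.floor_le (by positivity), Nat.lt_floor_add_one _⟩
  have hfll : ∀ n : ℕ, (ql n : ℝ) ≤ ρl * n ∧ ρl * n < ql n + 1 := fun n =>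
    ⟨Nat.floor_le (by positivity), Nat.lt_floor_add_one _⟩
  -- eventually qk ≥ 1 (hence ql ≥ 1)
  have hev1 : ∀ᶠ n : ℕ in atTop, 1 ≤ qk n := by
    have h1 : Tendsto (fun n : ℕ => ρk * n) atTop atTop :=
      Tendsto.const_mul_atTop hk tendsto_natCast_atTop_atTop
    filter_upwards [h1.eventually_ge_atTop 1] with n hn
    exact Nat.le_floor (by exact_mod_cast hn)
  have hkle : ∀ n, qk n ≤ ql n := fun n =>
    Nat.floor_le_floor (by nlinarith [Nat.cast_nonneg (α := ℝ) n] : ρk * n ≤ ρl * n)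
  -- hypotheses for main_lim
  have hm1 : ∀ᶠ n : ℕ in atTop, |(qk n : ℝ) - ρk * n| ≤ 1 := by
    filter_upwards with n
    obtain ⟨h1, h2⟩ := hflk n
    rw [abs_le]; constructor <;> linarith
  have hm2 : ∀ᶠ n : ℕ in atTop, |((ql n - 1 : ℕ) : ℝ) - ρl * n| ≤ 2 := by
    filter_upwards [hev1] with n hn
    have hn' : 1 ≤ ql n := le_trans hn (hkle n)
    obtain ⟨h1, h2⟩ := hfll n
    rw [Nat.cast_sub hn']
    rw [abs_le]; constructor <;> push_cast <;> linarith
  have hm3 : ∀ᶠ n : ℕ in atTop, |((ql n - qk n - 1 : ℕ) : ℝ) - (ρl - ρk) * n| ≤ 2 := by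
    filter_upwards [hev1] with n hn
    obtain ⟨h1, h2⟩ := hflk n
    obtain ⟨h3, h4⟩ := hfll n
    rcases le_or_gt (ql n) (qk n) with hle | hlt
    · have h0 : ql n - qk n - 1 = 0 := by omega
      rw [h0]
      have hcast : (ql n : ℝ) ≤ (qk n : ℝ) := by exact_mod_cast hle
      have hn0 : (0:ℝ) ≤ n := Nat.cast_nonneg n
      rw [abs_le]; constructor <;> push_cast <;> nlinarith
    · have h5 : 1 ≤ ql n - qk n := by omega
      rw [Nat.cast_sub (by omega : 1 ≤ ql n - qk n), Nat.cast_sub (by omega : qk n ≤ ql n)]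
      rw [abs_le]; constructor <;> push_cast <;> nlinarith
  -- the three El-limits
  have A1 := main_lim hk.le hm1
  have A2 := main_lim hl.le hm2
  have A3 := main_lim (by linarith : (0:ℝ) ≤ ρl - ρk) hm3
  -- the pi-power part
  have hmql : ∀ᶠ n : ℕ in atTop, |(ql n : ℝ) - ρl * n| ≤ 1 := by
    filter_upwards with n
    obtain ⟨h1, h2⟩ := hfll n
    rw [abs_le]; constructor <;> linarith
  have hP : Tendsto (fun n : ℕ => (1/(n:ℝ)^2) * ((qk n * ql n : ℕ) : ℝ) * Real.log Real.pi)
      atTop (nhds (ρk * ρl * Real.log Real.pi)) := by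
    have h := ((ratio_lim hm1).mul (ratio_lim hmql)).mul_const (Real.log Real.pi)
    apply h.congr'
    filter_upwards [eventually_ge_atTop 1] with n hn1
    have hn0 : ((n:ℝ)) ≠ 0 := by positivity
    push_cast
    field_simp
  -- combination
  have G := ((hP.sub A1).sub A2).add A3
  have e1 : ρl/ρk - 1 = (ρl-ρk)/ρk := by field_simp
  have e2 : Real.log (ρl/ρk) = Real.log ρl - Real.log ρk := Real.log_div hl.ne' hk.ne'
  have e3 : Fi ((ρl-ρk)/ρk)
      = ((ρl-ρk)/ρk)^2/2 * (Real.log (ρl-ρk) - Real.log ρk) - ((ρl-ρk)/ρk)^2/4 := by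
    rcases eq_or_lt_of_le hkl with rfl | hlt
    · simp [Fi]
    · rw [Fi, Real.log_div (by linarith : ρl - ρk ≠ 0) hk.ne']
  have hval : ρk * ρl * (Real.log Real.pi + 1 - Real.log ρk) + ρk ^ 2 / 4 -
      ρk ^ 2 * ∫ t in (ρl / ρk - 1)..(ρl / ρk), t * Real.log t
      = ρk * ρl * Real.log Real.pi - (ρk ^ 2 / 2 * Real.log ρk - 3 * ρk ^ 2 / 4)
        - (ρl ^ 2 / 2 * Real.log ρl - 3 * ρl ^ 2 / 4)
        + ((ρl - ρk) ^ 2 / 2 * Real.log (ρl - ρk) - 3 * (ρl - ρk) ^ 2 / 4) := by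
    rw [integral_mul_log, e1, e3]
    simp only [Fi]
    rw [e2]
    field_simp
    ring
  rw [hval]
  apply G.congr'
  filter_upwards [hev1, eventually_ge_atTop 1] with n hq1 hn1
  have hql1 : 1 ≤ ql n := le_trans hq1 (hkle n)
  have hfa : ∀ j : ℕ, ((Nat.factorial j : ℕ) : ℝ) ≠ 0 := fun j => by
    exact_mod_cast (Nat.factorial_pos j).ne'
  have hP1 : (0:ℝ) < ∏ j ∈ Icc 1 (qk n), (Nat.factorial j : ℝ) :=
    Finset.prod_pos fun j _ => by exact_mod_cast Nat.factorial_pos j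
  have hP2 : (0:ℝ) < ∏ j ∈ Icc (ql n - qk n) (ql n - 1), (Nat.factorial j : ℝ) :=
    Finset.prod_pos fun j _ => by exact_mod_cast Nat.factorial_pos j
  have hlog1 : Real.log (∏ j ∈ Icc 1 (qk n), (Nat.factorial j : ℝ)) = El (qk n) := by
    rw [Real.log_prod fun j _ => hfa j]; rfl
  have hlog2 : Real.log (∏ j ∈ Icc (ql n - qk n) (ql n - 1), (Nat.factorial j : ℝ))
      = El (ql n - 1) - El (ql n - qk n - 1) := by
    rw [Real.log_prod fun j _ => hfa j]
    exact sumIcc_fac (ql n - qk n) (ql n - 1) (by omega)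
  have hpi : (0:ℝ) < Real.pi ^ (qk n * ql n) := pow_pos Real.pi_pos _
  rw [Real.log_div hpi.ne' (mul_pos hP1 hP2).ne', Real.log_mul hP1.ne' hP2.ne',
    Real.log_pow, hlog1, hlog2]
  push_cast
  ring
end

section
/- Let k ≠ l in {1,…,d} with ρ_k ≤ ρ_l, let a ∈ 𝒜_{kl}, and let ξ ∈ 𝒜_{lk} fulfill the conjugate relations for (a,a*). Then φ(aa*) · (1 + ρ_k²/ρ_l²) · φ(ξξ*) ≥ ρ_k² + ρ_l². If moreover φ is faithful (φ(x*x) = 0 implies x = 0), then equality holds if and only if there exists a real c > 0 with ξ* = c·a. -/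
open scoped BigOperators

/-- A noncommutative probability space with `d` orthogonal projections. -/
structure NCPSpace (d : ℕ) (ρ : Fin d → ℝ) where
  A : Type
  [ring : Ring A]
  [alg : Algebra ℂ A]
  [sring : StarRing A]
  [smod : StarModule ℂ A]
  φ : A →ₗ[ℂ] ℂ
  φ_one : φ 1 = 1
  φ_pos : ∀ a : A, ∃ r : ℝ, 0 ≤ r ∧ φ (star a * a) = (r : ℂ)
  φ_trace : ∀ a b : A, φ (a * b) = φ (b * a)
  p : Fin d → A
  p_ne : ∀ k, p k ≠ 0
  p_sa : ∀ k, star (p k) = p k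
  p_idem : ∀ k, p k * p k = p k
  p_orth : ∀ k l, k ≠ l → p k * p l = 0
  p_sum : ∑ k, p k = 1
  ρ_pos : ∀ k, 0 < ρ k
  p_phi : ∀ k, φ (p k) = (ρ k : ℂ)

attribute [instance] NCPSpace.ring NCPSpace.alg NCPSpace.sring NCPSpace.smod

namespace NCPSpace

variable {d : ℕ} {ρ : Fin d → ℝ} (S : NCPSpace d ρ)

/-- The conditional expectation onto the span of the projections, in coordinates:
`E x k` is the `k`-th diagonal coordinate `φ_k (p_k x p_k)` of `E(x) ∈ 𝒟`. -/
noncomputable def E (x : S.A) (k : Fin d) : ℂ := S.φ (S.p k * x * S.p k) / (ρ k : ℂ)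

/-- Freeness with amalgamation over the diagonal subalgebra `𝒟`, for a family of subsets
(each understood as a subalgebra containing `𝒟`). -/
def FreeAmalg {I : Type*} (χ : I → Set S.A) : Prop :=
  ∀ (n : ℕ) (idx : Fin (n + 1) → I) (x : Fin (n + 1) → S.A),
    (∀ j, x j ∈ χ (idx j)) →
    (∀ j : Fin n, idx j.castSucc ≠ idx j.succ) →
    (∀ j k, S.E (x j) k = 0) →
    ∀ k, S.E (List.ofFn x).prod k = 0

/-- φ-freeness for a family of subsets. -/
def PhiFree {I : Type*} (χ : I → Set S.A) : Prop :=
  ∀ (n : ℕ) (idx : Fin (n + 1) → I) (x : Fin (n + 1) → S.A),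
    (∀ j, x j ∈ χ (idx j)) →
    (∀ j : Fin n, idx j.castSucc ≠ idx j.succ) →
    (∀ j, S.φ (x j) = 0) →
    S.φ (List.ofFn x).prod = 0

/-- The moment function `M` of a `𝒟`-semicircular element with covariance `φ`. -/
noncomputable def Mfun : List S.A → S.A
  | [] => 1
  | d₁ :: l =>
    ∑ j : Fin l.length,
      S.φ (d₁ * Mfun (l.take j)) • (l.get j * Mfun (l.drop (j + 1)))
  termination_by l => l.length
  decreasing_by
  · simpa using Nat.lt_succ_of_le (by simpa using List.length_take_le _ _)
  · simpa using Nat.lt_succ_of_le (by simpa using List.length_drop_le _ _)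

/-- The diagonal subalgebra `𝒟` (the linear span of the projections), as a set. -/
def Dset : Set S.A := Submodule.span ℂ (Set.range S.p)

/-- `𝒟`-semicircularity with covariance `φ`. -/
def IsSemicircular (s : S.A) : Prop :=
  star s = s ∧
  ∀ l : List S.A, l ≠ [] → (∀ x ∈ l, x ∈ S.Dset) →
    ∀ k, S.E (l.map (fun x => s * x)).prod k = S.E (S.Mfun l) k

end NCPSpace

/-- `cpow x p n` is `x ^ n`, with the convention that the zeroth power is the projection `p`. -/
def cpow {A : Type*} [Monoid A] (x p : A) : ℕ → A
  | 0 => p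
  | n + 1 => x ^ (n + 1)

namespace NCPSpace

variable {d : ℕ} {ρ : Fin d → ℝ}

/-- `ξ ∈ 𝒜_{lk}` fulfills the conjugate relations for `(a, a*)`, `a ∈ 𝒜_{kl}`:
`φ_l(ξ a (a*a)^n) = Σ_{i=0}^n φ_k((aa*)^i) φ_l((a*a)^{n-i})`, with the conventions
`(aa*)^0 = p_k` and `(a*a)^0 = p_l`. -/
def ConjRel (S : NCPSpace d ρ) (k l : Fin d) (a ξ : S.A) : Prop :=
  ∀ n : ℕ,
    S.φ (ξ * a * cpow (star a * a) (S.p l) n) / (ρ l : ℂ) =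
      ∑ i ∈ Finset.range (n + 1),
        (S.φ (cpow (a * star a) (S.p k) i) / (ρ k : ℂ)) *
          (S.φ (cpow (star a * a) (S.p l) (n - i)) / (ρ l : ℂ))

end NCPSpace


namespace CRaux

variable {d : ℕ} {ρ : Fin d → ℝ} (S : NCPSpace d ρ)

lemma phi_im (x : S.A) : (S.φ (star x * x)).im = 0 := by
  obtain ⟨r, _, h⟩ := S.φ_pos x; simp [h]

lemma phi_re_nonneg (x : S.A) : 0 ≤ (S.φ (star x * x)).re := by
  obtain ⟨r, hr, h⟩ := S.φ_pos x; simp [h, hr]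

lemma phi_real (x : S.A) : S.φ (star x * x) = (((S.φ (star x * x)).re : ℝ) : ℂ) := by
  apply Complex.ext <;> simp [phi_im]

lemma phi_star (x : S.A) : S.φ (star x) = starRingEnd ℂ (S.φ x) := by
  have e1 : star ((1:S.A) + x) * ((1:S.A) + x)
      = 1 + x + star x + star x * x := by
    rw [star_add, star_one]; noncomm_ring
  have e2 : star ((1:S.A) + (Complex.I) • x) * ((1:S.A) + Complex.I • x)
      = 1 + Complex.I • x + (-Complex.I) • star x + star x * x := by
    rw [star_add, star_one, star_smul]
    rw [show (star Complex.I) = -Complex.I by simp [Complex.star_def, Complex.conj_I]]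
    rw [add_mul, mul_add, mul_add]
    simp only [one_mul, mul_one, smul_mul_assoc, mul_smul_comm, smul_smul]
    match_scalars <;> simp [Complex.I_sq]
  have h1 := phi_im S (1 + x)
  have h2 := phi_im S (1 + Complex.I • x)
  have hx := phi_im S x
  rw [e1] at h1
  rw [e2] at h2
  simp only [map_add, map_smul, S.φ_one, smul_eq_mul, Complex.add_im,
    Complex.one_im, Complex.mul_im, Complex.I_re, Complex.I_im, Complex.neg_re,
    Complex.neg_im, phi_im] at h1 h2
  apply Complex.ext <;>
    simp only [Complex.conj_re, Complex.conj_im] <;> nlinarith [h1, h2]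

lemma quad_form (a ξ : S.A) (X Y rl : ℝ)
    (hX : S.φ (ξ * star ξ) = (X : ℂ)) (hY : S.φ (star a * a) = (Y : ℂ))
    (hB : S.φ (ξ * a) = (rl : ℂ)) (hB' : S.φ (star a * star ξ) = (rl : ℂ))
    (s t : ℝ) :
    S.φ (star ((s : ℂ) • star ξ + (t : ℂ) • a) * ((s : ℂ) • star ξ + (t : ℂ) • a))
      = ((s ^ 2 * X + 2 * (s * t) * rl + t ^ 2 * Y : ℝ) : ℂ) := by
  have e : star ((s : ℂ) • star ξ + (t : ℂ) • a) * ((s : ℂ) • star ξ + (t : ℂ) • a)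
      = ((s : ℂ) * (s : ℂ)) • (ξ * star ξ) + ((s : ℂ) * (t : ℂ)) • (ξ * a)
        + ((t : ℂ) * (s : ℂ)) • (star a * star ξ) + ((t : ℂ) * (t : ℂ)) • (star a * a) := by
    rw [star_add, star_smul, star_smul, star_star]
    rw [show (star (s : ℂ)) = (s : ℂ) by simp [Complex.star_def, Complex.conj_ofReal]]
    rw [show (star (t : ℂ)) = (t : ℂ) by simp [Complex.star_def, Complex.conj_ofReal]]
    rw [add_mul, mul_add, mul_add]
    simp only [smul_mul_assoc, mul_smul_comm, smul_smul]
    module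
  rw [e]
  simp only [map_add, map_smul, hX, hY, hB, hB', smul_eq_mul]
  push_cast
  ring

end CRaux

/-- Cramér–Rao inequality. For `a ∈ 𝒜_{kl}` nonzero (`k ≠ l`, `ρ_k ≤ ρ_l`)
and `ξ ∈ 𝒜_{lk}` fulfilling the conjugate relations for `(a, a*)`:
`φ(aa*) (1 + ρ_k²/ρ_l²) φ(ξξ*) ≥ ρ_k² + ρ_l²`, and if `φ` is faithful then equality holds
iff `ξ* = c a` for some real `c > 0`. -/
theorem stmt10 {d : ℕ} {ρ : Fin d → ℝ} (S : NCPSpace d ρ) (k l : Fin d)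
    (hkl : k ≠ l) (hρ : ρ k ≤ ρ l) (a ξ : S.A) (ha0 : a ≠ 0)
    (ha : S.p k * a * S.p l = a) (hξ : S.p l * ξ * S.p k = ξ)
    (hconj : S.ConjRel k l a ξ) :
    ρ k ^ 2 + ρ l ^ 2 ≤
      (S.φ (a * star a)).re * ((1 + ρ k ^ 2 / ρ l ^ 2) * (S.φ (ξ * star ξ)).re) ∧
    ((∀ x : S.A, S.φ (star x * x) = 0 → x = 0) →
      ((ρ k ^ 2 + ρ l ^ 2 =
          (S.φ (a * star a)).re * ((1 + ρ k ^ 2 / ρ l ^ 2) * (S.φ (ξ * star ξ)).re)) ↔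
        ∃ c : ℝ, 0 < c ∧ star ξ = (c : ℂ) • a)) := by
  classical
  have hρk := S.ρ_pos k
  have hρl := S.ρ_pos l
  have hρlC : ((ρ l : ℝ) : ℂ) ≠ 0 := by exact_mod_cast ne_of_gt hρl
  have hρkC : ((ρ k : ℝ) : ℂ) ≠ 0 := by exact_mod_cast ne_of_gt hρk
  -- a * p l = a
  have hapl : a * S.p l = a := by
    conv_lhs => rw [← ha]
    rw [mul_assoc (S.p k * a), S.p_idem, ha]
  -- conjugate relation at n = 0
  have hξa : S.φ (ξ * a) = ((ρ l : ℝ) : ℂ) := by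
    have h0 := hconj 0
    simp only [cpow, Finset.range_one, Finset.sum_singleton, Nat.sub_self,
      S.p_phi, zero_add] at h0
    rw [div_self hρkC, div_self hρlC, one_mul, mul_assoc, hapl] at h0
    field_simp at h0
    exact h0
  set X : ℝ := (S.φ (ξ * star ξ)).re with hXdef
  set Y : ℝ := (S.φ (star a * a)).re with hYdef
  have hXc : S.φ (ξ * star ξ) = (X : ℂ) := by
    rw [hXdef, show ξ * star ξ = star (star ξ) * star ξ by rw [star_star]]
    exact CRaux.phi_real S (star ξ)
  have hYc : S.φ (star a * a) = (Y : ℂ) := CRaux.phi_real S a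
  have hX0 : 0 ≤ X := by
    rw [hXdef, show ξ * star ξ = star (star ξ) * star ξ by rw [star_star]]
    exact CRaux.phi_re_nonneg S (star ξ)
  have hY0 : 0 ≤ Y := CRaux.phi_re_nonneg S a
  have haa : (S.φ (a * star a)).re = Y := by rw [S.φ_trace]
  have hB' : S.φ (star a * star ξ) = ((ρ l : ℝ) : ℂ) := by
    rw [show star a * star ξ = star (ξ * a) by rw [star_mul], CRaux.phi_star, hξa,
      Complex.conj_ofReal]
  have hQ : ∀ s t : ℝ, 0 ≤ s ^ 2 * X + 2 * (s * t) * ρ l + t ^ 2 * Y := by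
    intro s t
    have h := CRaux.phi_re_nonneg S ((s : ℂ) • star ξ + (t : ℂ) • a)
    rw [CRaux.quad_form S a ξ X Y (ρ l) hXc hYc hξa hB' s t] at h
    rwa [Complex.ofReal_re] at h
  -- Cauchy–Schwarz
  have hCS : ρ l ^ 2 ≤ X * Y := by
    rcases eq_or_lt_of_le hX0 with hX | hX
    · exfalso
      have h := hQ (-(Y + 1) / (2 * ρ l)) 1
      rw [← hX] at h
      have hs : 2 * (-(Y + 1) / (2 * ρ l) * 1) * ρ l = -(Y + 1) := by
        field_simp
      rw [hs] at h
      nlinarith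
    · have h := hQ (-(ρ l)) X
      nlinarith
  have hXpos : 0 < X := by nlinarith
  have hYpos : 0 < Y := by nlinarith
  have hRHS : Y * ((1 + ρ k ^ 2 / ρ l ^ 2) * X) = X * Y * (ρ k ^ 2 + ρ l ^ 2) / ρ l ^ 2 := by
    field_simp
    ring
  constructor
  · rw [haa, hRHS]
    rw [le_div_iff₀ (by positivity)]
    nlinarith
  · intro hf
    constructor
    · intro heq
      rw [haa, hRHS] at heq
      rw [eq_div_iff (by positivity : (ρ l : ℝ) ^ 2 ≠ 0)] at heq
      have hXY : X * Y = ρ l ^ 2 := by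
        have hne : (ρ k ^ 2 + ρ l ^ 2) ≠ 0 := by positivity
        apply mul_right_cancel₀ hne
        linear_combination -heq
      have hz : S.φ (star (((-(ρ l) : ℝ) : ℂ) • star ξ + (X : ℂ) • a) *
          (((-(ρ l) : ℝ) : ℂ) • star ξ + (X : ℂ) • a)) = 0 := by
        rw [CRaux.quad_form S a ξ X Y (ρ l) hXc hYc hξa hB' (-(ρ l)) X]
        have : (-(ρ l)) ^ 2 * X + 2 * (-(ρ l) * X) * ρ l + X ^ 2 * Y = 0 := by
          nlinarith [hXY]
        rw [this]
        simp
      have hz0 := hf _ hz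
      have h5 : ((ρ l : ℝ) : ℂ) • star ξ = (X : ℂ) • a := by
        have h := hz0
        push_cast at h
        rw [neg_smul, neg_add_eq_zero] at h
        exact h
      refine ⟨X / ρ l, by positivity, ?_⟩
      push_cast
      rw [div_eq_inv_mul, ← smul_smul, ← h5, smul_smul,
        inv_mul_cancel₀ hρlC, one_smul]
    · rintro ⟨c, hc, hcs⟩
      have hξeq : ξ = (c : ℂ) • star a := by
        rw [← star_star ξ, hcs, star_smul]
        simp [Complex.star_def, Complex.conj_ofReal]
      have h6 : S.φ (ξ * star ξ) = ((c : ℂ) * (c : ℂ)) * S.φ (star a * a) := by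
        rw [show ξ * star ξ = ((c : ℂ) * (c : ℂ)) • (star a * a) by
          rw [hcs, hξeq]
          simp only [smul_mul_assoc, mul_smul_comm, smul_smul]]
        rw [map_smul, smul_eq_mul]
      rw [hXc, hYc] at h6
      have hX2 : X = c ^ 2 * Y := by
        have h6' : ((X : ℝ) : ℂ) = ((c ^ 2 * Y : ℝ) : ℂ) := by push_cast; linear_combination h6
        exact_mod_cast h6'
      have h7 : S.φ (ξ * a) = (c : ℂ) * S.φ (star a * a) := by
        rw [hξeq]
        simp only [smul_mul_assoc, map_smul, smul_eq_mul]
      rw [hξa, hYc] at h7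
      have hρY : ρ l = c * Y := by
        have h7' : ((ρ l : ℝ) : ℂ) = ((c * Y : ℝ) : ℂ) := by push_cast; linear_combination h7
        exact_mod_cast h7'
      have hXY : X * Y = ρ l ^ 2 := by rw [hX2, hρY]; ring
      rw [haa, hRHS, hXY]
      field_simp
end

section
/- Let k ≠ l in {1,…,d}, let x ∈ 𝒜_{kl}, and suppose φ is faithful (φ(z*z) = 0 implies z = 0). Let ξ ∈ 𝒜_{lk} fulfill the conjugate relations for (x,x*) and suppose ξ belongs to the *-subalgebra of 𝒜 generated by 𝒟 ∪ {x}. Then x·ξ = ξ*·x*. -/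
open scoped BigOperators

namespace NCPSpace
variable {d : ℕ} {ρ : Fin d → ℝ} (S : NCPSpace d ρ)

lemma sq_real (a : S.A) : (starRingEnd ℂ) (S.φ (star a * a)) = S.φ (star a * a) := by
  obtain ⟨r, -, hr⟩ := S.φ_pos a
  rw [hr, Complex.conj_ofReal]

lemma phi_star (a : S.A) : S.φ (star a) = (starRingEnd ℂ) (S.φ a) := by
  have h1 := S.sq_real (1 + a)
  have h2 := S.sq_real (1 + Complex.I • a)
  have e1 : star (1 + a) * (1 + a) = 1 + a + star a + star a * a := by
    rw [star_add, star_one]; noncomm_ring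
  have e2 : star (1 + Complex.I • a) * (1 + Complex.I • a)
      = 1 + Complex.I • a + (-Complex.I) • star a + star a * a := by
    rw [star_add, star_one, star_smul]
    simp only [add_mul, mul_add, one_mul, mul_one, smul_mul_smul_comm, starRingEnd_apply]
    rw [Complex.star_def, Complex.conj_I]
    simp only [neg_mul, Complex.I_mul_I, neg_neg, one_smul]
    abel
  rw [e1] at h1; rw [e2] at h2
  simp only [map_add, map_smul, S.φ_one, map_one, Complex.conj_ofReal, smul_eq_mul,
    Complex.conj_I, mul_comm] at h1 h2
  have hw := S.sq_real a
  have hone : (starRingEnd ℂ) (1 : ℂ) = 1 := by simp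
  set u := S.φ a
  set v := S.φ (star a)
  set w := S.φ (star a * a)
  have hu : (starRingEnd ℂ) u = (starRingEnd ℂ) u := rfl
  -- from h1 : conj(1 + u + v + w) = 1 + u + v + w
  -- from h2 : conj(1 + I*u - I*v + w) = 1 + I*u - I*v + w
  have c1 : (starRingEnd ℂ) u + (starRingEnd ℂ) v = u + v := by
    have := h1
    simp only [map_add, hone, hw] at this
    linear_combination this
  have c2 : (starRingEnd ℂ) v - (starRingEnd ℂ) u = u - v := by
    have := h2
    simp only [map_add, map_mul, map_neg, hone, hw, Complex.conj_I] at this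
    linear_combination (-Complex.I) * this +
      (-(starRingEnd ℂ) u + (starRingEnd ℂ) v - u + v) * Complex.I_sq
  have : (starRingEnd ℂ) v = u := by linear_combination (c1 + c2) / 2
  calc v = (starRingEnd ℂ) ((starRingEnd ℂ) v) := by rw [Complex.conj_conj]
    _ = (starRingEnd ℂ) u := by rw [this]

end NCPSpace

/-- If `φ` is faithful, `x ∈ 𝒜_{kl}` (`k ≠ l`), and `ξ ∈ 𝒜_{lk}` fulfills
the conjugate relations for `(x, x*)` and lies in the `*`-subalgebra generated by `𝒟 ∪ {x}`,
then `x ξ = ξ* x*`. -/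
theorem stmt11 {d : ℕ} {ρ : Fin d → ℝ} (S : NCPSpace d ρ) (k l : Fin d)
    (hkl : k ≠ l)
    (hfaith : ∀ z : S.A, S.φ (star z * z) = 0 → z = 0)
    (x ξ : S.A)
    (hx : S.p k * x * S.p l = x) (hξ : S.p l * ξ * S.p k = ξ)
    (hconj : S.ConjRel k l x ξ)
    (hmem : ξ ∈ StarAlgebra.adjoin ℂ (S.Dset ∪ {x})) :
    x * ξ = star ξ * star x := by
  have horth : S.p l * S.p k = 0 := S.p_orth l k (Ne.symm hkl)
  have hPx : S.p k * x = x := by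
    nth_rewrite 1 [← hx]
    rw [← mul_assoc, ← mul_assoc, S.p_idem, hx]
  have hxQ : x * S.p l = x := by
    nth_rewrite 1 [← hx]
    rw [mul_assoc, S.p_idem, hx]
  have hxP : x * S.p k = 0 := by
    nth_rewrite 1 [← hxQ]
    rw [mul_assoc, horth, mul_zero]
  have hQx : S.p l * x = 0 := by
    nth_rewrite 1 [← hPx]
    rw [← mul_assoc, horth, zero_mul]
  have hsQ : star x * S.p l = 0 := by
    rw [← S.p_sa l, ← star_mul, hQx, star_zero]
  have hQs : S.p l * star x = star x := by
    rw [← S.p_sa l, ← star_mul, hxQ]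
  have hsP : star x * S.p k = star x := by
    rw [← S.p_sa k, ← star_mul, hPx]
  have hPs : S.p k * star x = 0 := by
    rw [← S.p_sa k, ← star_mul, hxP, star_zero]
  have hxx : x * x = 0 := by
    nth_rewrite 2 [← hPx]
    rw [← mul_assoc, hxP, zero_mul]
  have hss : star x * star x = 0 := by
    rw [← star_mul, hxx, star_zero]
  have hcomm : ∀ n : ℕ, x * (star x * x) ^ n = (x * star x) ^ n * x := by
    intro n
    induction n with
    | zero => simp
    | succ n ih =>
      rw [pow_succ, pow_succ, ← mul_assoc, ih, mul_assoc, mul_assoc, mul_assoc]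
  have hcomm' : ∀ n : ℕ, (star x * x) ^ n * star x = star x * (x * star x) ^ n := by
    intro n
    have := congrArg star (hcomm n)
    rwa [star_mul, star_mul, star_pow, star_pow, star_mul, star_mul, star_star] at this
  have hpowQ : ∀ n : ℕ, (star x * x) ^ (n + 1) * S.p l = (star x * x) ^ (n + 1) := by
    intro n
    rw [pow_succ, mul_assoc, mul_assoc, hxQ]
  have hQpow : ∀ n : ℕ, S.p l * (star x * x) ^ (n + 1) = (star x * x) ^ (n + 1) := by
    intro n
    rw [pow_succ', ← mul_assoc, ← mul_assoc, hQs]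
  -- helper annihilation lemmas
  have habs : ∀ (z : S.A) (i j : Fin d), S.p i * z = z → j ≠ i → S.p j * z = 0 := by
    intro z i j h hne
    rw [← h, ← mul_assoc, S.p_orth j i hne, zero_mul]
  have habs' : ∀ (z : S.A) (i j : Fin d), z * S.p i = z → i ≠ j → z * S.p j = 0 := by
    intro z i j h hne
    rw [← h, mul_assoc, S.p_orth i j hne, mul_zero]
  have H1 : ∀ m : ℕ, star x * ((star x * x) ^ m * star x) = 0 := by
    intro m; rw [hcomm' m, ← mul_assoc, hss, zero_mul]
  have H1' : ∀ m : ℕ, x * (x * (star x * x) ^ m) = 0 := by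
    intro m; rw [← mul_assoc, hxx, zero_mul]
  have H3 : ∀ m : ℕ, star x * (star x * x) ^ (m + 1) = 0 := by
    intro m; rw [pow_succ', ← mul_assoc, ← mul_assoc, hss, zero_mul, zero_mul]
  have H4 : ∀ m : ℕ, x * (x * star x) ^ (m + 1) = 0 := by
    intro m; rw [pow_succ', ← mul_assoc, ← mul_assoc, hxx, zero_mul, zero_mul]
  have H5 : ∀ m : ℕ, (star x * x) ^ (m + 1) * x = 0 := by
    intro m; rw [pow_succ, mul_assoc, mul_assoc, hxx, mul_zero, mul_zero]
  have H6 : ∀ m : ℕ, (x * star x) ^ (m + 1) * star x = 0 := by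
    intro m; rw [pow_succ, mul_assoc, mul_assoc, hss, mul_zero, mul_zero]
  have hwv : (star x * x) * (x * star x) = 0 := by
    rw [mul_assoc, ← mul_assoc x x, hxx, zero_mul, mul_zero]
  have hvw : (x * star x) * (star x * x) = 0 := by
    rw [mul_assoc, ← mul_assoc (star x) (star x) x, hss, zero_mul, mul_zero]
  have H7 : ∀ m : ℕ, (star x * x) * (x * star x) ^ (m + 1) = 0 := by
    intro m; rw [pow_succ', ← mul_assoc, hwv, zero_mul]
  have H8 : ∀ m : ℕ, (x * star x) * (star x * x) ^ (m + 1) = 0 := by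
    intro m; rw [pow_succ', ← mul_assoc, hvw, zero_mul]
  -- product table
  have j_aa : ∀ n m : ℕ, ((star x * x) ^ n * star x) * ((star x * x) ^ m * star x) = 0 := by
    intro n m; rw [mul_assoc, H1 m, mul_zero]
  have j_ab : ∀ n m : ℕ, ((star x * x) ^ n * star x) * (x * (star x * x) ^ m)
      = (star x * x) ^ (n + m + 1) := by
    intro n m; rw [mul_assoc, ← mul_assoc (star x) x, ← pow_succ', ← pow_add,
      show n + (m + 1) = n + m + 1 by omega]
  have j_ac : ∀ n m : ℕ, ((star x * x) ^ n * star x) * (star x * x) ^ (m + 1) = 0 := by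
    intro n m; rw [mul_assoc, H3 m, mul_zero]
  have j_ae : ∀ n m : ℕ, ((star x * x) ^ n * star x) * (x * star x) ^ (m + 1)
      = (star x * x) ^ (n + m + 1) * star x := by
    intro n m; rw [mul_assoc, ← hcomm' (m + 1), ← mul_assoc, ← pow_add,
      show n + (m + 1) = n + m + 1 by omega]
  have j_ba : ∀ n m : ℕ, (x * (star x * x) ^ n) * ((star x * x) ^ m * star x)
      = (x * star x) ^ (n + m + 1) := by
    intro n m
    rw [mul_assoc, ← mul_assoc ((star x * x) ^ n), ← pow_add, hcomm' (n + m), ← mul_assoc,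
      ← pow_succ']
  have j_bb : ∀ n m : ℕ, (x * (star x * x) ^ n) * (x * (star x * x) ^ m) = 0 := by
    intro n m
    nth_rewrite 1 [hcomm n]
    rw [mul_assoc, H1' m, mul_zero]
  have j_bc : ∀ n m : ℕ, (x * (star x * x) ^ n) * (star x * x) ^ (m + 1)
      = x * (star x * x) ^ (n + m + 1) := by
    intro n m; rw [mul_assoc, ← pow_add, show n + (m + 1) = n + m + 1 by omega]
  have j_be : ∀ n m : ℕ, (x * (star x * x) ^ n) * (x * star x) ^ (m + 1) = 0 := by
    intro n m; rw [hcomm n, mul_assoc, H4 m, mul_zero]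
  have j_ca : ∀ n m : ℕ, (star x * x) ^ (n + 1) * ((star x * x) ^ m * star x)
      = (star x * x) ^ (n + m + 1) * star x := by
    intro n m; rw [← mul_assoc, ← pow_add, Nat.add_right_comm]
  have j_cb : ∀ n m : ℕ, (star x * x) ^ (n + 1) * (x * (star x * x) ^ m) = 0 := by
    intro n m; rw [← mul_assoc, H5 n, zero_mul]
  have j_cc : ∀ n m : ℕ, (star x * x) ^ (n + 1) * (star x * x) ^ (m + 1)
      = (star x * x) ^ (n + m + 1 + 1) := by
    intro n m; rw [← pow_add, show n + 1 + (m + 1) = n + m + 1 + 1 by omega]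
  have j_ce : ∀ n m : ℕ, (star x * x) ^ (n + 1) * (x * star x) ^ (m + 1) = 0 := by
    intro n m; rw [pow_succ, mul_assoc, H7 m, mul_zero]
  have j_ea : ∀ n m : ℕ, (x * star x) ^ (n + 1) * ((star x * x) ^ m * star x) = 0 := by
    intro n m; rw [hcomm' m, ← mul_assoc, H6 n, zero_mul]
  have j_eb : ∀ n m : ℕ, (x * star x) ^ (n + 1) * (x * (star x * x) ^ m)
      = x * (star x * x) ^ (n + m + 1) := by
    intro n m; rw [← mul_assoc, ← hcomm (n + 1), mul_assoc, ← pow_add, Nat.add_right_comm]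
  have j_ec : ∀ n m : ℕ, (x * star x) ^ (n + 1) * (star x * x) ^ (m + 1) = 0 := by
    intro n m; rw [pow_succ, mul_assoc, H8 m, mul_zero]
  have j_ee : ∀ n m : ℕ, (x * star x) ^ (n + 1) * (x * star x) ^ (m + 1)
      = (x * star x) ^ (n + m + 1 + 1) := by
    intro n m; rw [← pow_add, show n + 1 + (m + 1) = n + m + 1 + 1 by omega]
  -- projection boundary lemmas
  have haL : ∀ n : ℕ, S.p l * ((star x * x) ^ n * star x) = (star x * x) ^ n * star x := by
    intro n; rw [hcomm' n, ← mul_assoc, hQs]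
  have haK : ∀ n : ℕ, ((star x * x) ^ n * star x) * S.p k = (star x * x) ^ n * star x := by
    intro n; rw [mul_assoc, hsP]
  have hbK : ∀ n : ℕ, S.p k * (x * (star x * x) ^ n) = x * (star x * x) ^ n := by
    intro n; rw [← mul_assoc, hPx]
  have hbQ : ∀ n : ℕ, (x * (star x * x) ^ n) * S.p l = x * (star x * x) ^ n := by
    intro n; rw [hcomm n, mul_assoc, hxQ]
  have heK : ∀ n : ℕ, (x * star x) ^ (n + 1) * S.p k = (x * star x) ^ (n + 1) := by
    intro n; rw [pow_succ, mul_assoc, mul_assoc, hsP]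
  have hKe : ∀ n : ℕ, S.p k * (x * star x) ^ (n + 1) = (x * star x) ^ (n + 1) := by
    intro n; rw [pow_succ', ← mul_assoc, ← mul_assoc, hPx]
  have hcK : ∀ n : ℕ, (star x * x) ^ (n + 1) * S.p k = 0 := by
    intro n; rw [pow_succ, mul_assoc, mul_assoc, hxP, mul_zero, mul_zero]
  have hQe : ∀ n : ℕ, S.p l * (x * star x) ^ (n + 1) = 0 := by
    intro n; rw [pow_succ', ← mul_assoc, ← mul_assoc, hQx, zero_mul, zero_mul]
  -- the spanning set
  set G : Set S.A := Set.range S.p ∪ Set.range (fun n : ℕ => (star x * x) ^ n * star x)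
      ∪ Set.range (fun n : ℕ => x * (star x * x) ^ n)
      ∪ Set.range (fun n : ℕ => (star x * x) ^ (n + 1))
      ∪ Set.range (fun n : ℕ => (x * star x) ^ (n + 1)) with hG
  have memP : ∀ j, S.p j ∈ Submodule.span ℂ G := fun j =>
    Submodule.subset_span (by rw [hG]; left; left; left; left; exact ⟨j, rfl⟩)
  have memA : ∀ n : ℕ, (star x * x) ^ n * star x ∈ Submodule.span ℂ G := fun n =>
    Submodule.subset_span (by rw [hG]; left; left; left; right; exact ⟨n, rfl⟩)
  have memB : ∀ n : ℕ, x * (star x * x) ^ n ∈ Submodule.span ℂ G := fun n =>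
    Submodule.subset_span (by rw [hG]; left; left; right; exact ⟨n, rfl⟩)
  have memC : ∀ n : ℕ, (star x * x) ^ (n + 1) ∈ Submodule.span ℂ G := fun n =>
    Submodule.subset_span (by rw [hG]; left; right; exact ⟨n, rfl⟩)
  have memE : ∀ n : ℕ, (x * star x) ^ (n + 1) ∈ Submodule.span ℂ G := fun n =>
    Submodule.subset_span (by rw [hG]; right; exact ⟨n, rfl⟩)
  -- products of generators stay in the span
  have hGmul : ∀ g₁ ∈ G, ∀ g₂ ∈ G, g₁ * g₂ ∈ Submodule.span ℂ G := by
    intro g₁ hg₁ g₂ hg₂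
    rw [hG] at hg₁ hg₂
    simp only [Set.mem_union, Set.mem_range] at hg₁ hg₂
    rcases hg₁ with ((((⟨j, rfl⟩ | ⟨n, rfl⟩) | ⟨n, rfl⟩) | ⟨n, rfl⟩) | ⟨n, rfl⟩) <;>
      rcases hg₂ with ((((⟨j', rfl⟩ | ⟨m, rfl⟩) | ⟨m, rfl⟩) | ⟨m, rfl⟩) | ⟨m, rfl⟩)
    · rcases eq_or_ne j j' with rfl | hne
      · rw [S.p_idem]; exact memP j
      · rw [S.p_orth j j' hne]; exact zero_mem _
    · rcases eq_or_ne j l with rfl | hne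
      · rw [haL m]; exact memA m
      · rw [habs _ l j (haL m) hne]; exact zero_mem _
    · rcases eq_or_ne j k with rfl | hne
      · rw [hbK m]; exact memB m
      · rw [habs _ k j (hbK m) hne]; exact zero_mem _
    · rcases eq_or_ne j l with rfl | hne
      · rw [hQpow m]; exact memC m
      · rw [habs _ l j (hQpow m) hne]; exact zero_mem _
    · rcases eq_or_ne j k with rfl | hne
      · rw [hKe m]; exact memE m
      · rw [habs _ k j (hKe m) hne]; exact zero_mem _
    · rcases eq_or_ne j' k with rfl | hne
      · rw [haK n]; exact memA n
      · rw [habs' _ k j' (haK n) (Ne.symm hne)]; exact zero_mem _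
    · rw [j_aa n m]; exact zero_mem _
    · rw [j_ab n m]; exact memC (n + m)
    · rw [j_ac n m]; exact zero_mem _
    · rw [j_ae n m]; exact memA (n + m + 1)
    · rcases eq_or_ne j' l with rfl | hne
      · rw [hbQ n]; exact memB n
      · rw [habs' _ l j' (hbQ n) (Ne.symm hne)]; exact zero_mem _
    · rw [j_ba n m]; exact memE (n + m)
    · rw [j_bb n m]; exact zero_mem _
    · rw [j_bc n m]; exact memB (n + m + 1)
    · rw [j_be n m]; exact zero_mem _
    · rcases eq_or_ne j' l with rfl | hne
      · rw [hpowQ n]; exact memC n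
      · rw [habs' _ l j' (hpowQ n) (Ne.symm hne)]; exact zero_mem _
    · rw [j_ca n m]; exact memA (n + m + 1)
    · rw [j_cb n m]; exact zero_mem _
    · rw [j_cc n m]; exact memC (n + m + 1)
    · rw [j_ce n m]; exact zero_mem _
    · rcases eq_or_ne j' k with rfl | hne
      · rw [heK n]; exact memE n
      · rw [habs' _ k j' (heK n) (Ne.symm hne)]; exact zero_mem _
    · rw [j_ea n m]; exact zero_mem _
    · rw [j_eb n m]; exact memB (n + m + 1)
    · rw [j_ec n m]; exact zero_mem _
    · rw [j_ee n m]; exact memE (n + m + 1)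
  -- the span is a star subalgebra
  have hone : (1 : S.A) ∈ Submodule.span ℂ G := by
    rw [← S.p_sum]
    exact Submodule.sum_mem _ fun j _ => memP j
  have hmul : ∀ z₁ ∈ Submodule.span ℂ G, ∀ z₂ ∈ Submodule.span ℂ G,
      z₁ * z₂ ∈ Submodule.span ℂ G := by
    intro z₁ h₁ z₂ h₂
    have hle : Submodule.span ℂ G * Submodule.span ℂ G ≤ Submodule.span ℂ G := by
      rw [Submodule.span_mul_span]
      refine Submodule.span_le.2 ?_
      rw [Set.mul_subset_iff]
      exact hGmul
    exact hle (Submodule.mul_mem_mul h₁ h₂)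
  have hstar : ∀ z ∈ Submodule.span ℂ G, star z ∈ Submodule.span ℂ G := by
    intro z hz
    induction hz using Submodule.span_induction with
    | mem g hg =>
      rw [hG] at hg
      simp only [Set.mem_union, Set.mem_range] at hg
      rcases hg with ((((⟨j, rfl⟩ | ⟨n, rfl⟩) | ⟨n, rfl⟩) | ⟨n, rfl⟩) | ⟨n, rfl⟩)
      · rw [S.p_sa]; exact memP j
      · rw [star_mul, star_star, star_pow, star_mul, star_star]; exact memB n
      · rw [star_mul, star_pow, star_mul, star_star]; exact memA n
      · rw [star_pow, star_mul, star_star]; exact memC n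
      · rw [star_pow, star_mul, star_star]; exact memE n
    | zero => rw [star_zero]; exact zero_mem _
    | add y z hy hz ihy ihz => rw [star_add]; exact add_mem ihy ihz
    | smul r z hz ih => rw [star_smul]; exact Submodule.smul_mem _ _ ih
  -- ξ lies in the span
  have hξB : ξ ∈ Submodule.span ℂ G := by
    have hBs : S.Dset ∪ {x} ⊆ ((Submodule.span ℂ G).toSubalgebra hone
        (fun z₁ z₂ h₁ h₂ => hmul z₁ h₁ z₂ h₂) : Set S.A) := by
      rintro z (hz | hz)
      · exact Submodule.span_le.2 (fun g hg => Submodule.subset_span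
          (by rw [hG]; left; left; left; left; exact hg)) hz
      · simp only [Set.mem_singleton_iff] at hz
        have hz2 : z = x * (star x * x) ^ 0 := by rw [pow_zero, mul_one, hz]
        rw [hz2]; exact memB 0
    exact StarAlgebra.adjoin_le (S := ⟨(Submodule.span ℂ G).toSubalgebra hone
      (fun z₁ z₂ h₁ h₂ => hmul z₁ h₁ z₂ h₂), fun {z} hz => hstar z hz⟩) hBs hmem
  -- compress to the 𝒜_{lk} corner
  have hξV : ξ ∈ Submodule.span ℂ (Set.range (fun n : ℕ => (star x * x) ^ n * star x)) := by
    rw [← hξ]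
    clear hξ hconj hmem
    induction hξB using Submodule.span_induction with
    | mem g hg =>
      rw [hG] at hg
      simp only [Set.mem_union, Set.mem_range] at hg
      rcases hg with ((((⟨j, rfl⟩ | ⟨n, rfl⟩) | ⟨n, rfl⟩) | ⟨n, rfl⟩) | ⟨n, rfl⟩)
      · rcases eq_or_ne j l with rfl | hne
        · rw [S.p_idem, horth]; exact zero_mem _
        · rw [habs _ j l (S.p_idem j) (Ne.symm hne), zero_mul]; exact zero_mem _
      · rw [haL n, haK n]; exact Submodule.subset_span ⟨n, rfl⟩
      · rw [habs _ k l (hbK n) (Ne.symm hkl), zero_mul]; exact zero_mem _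
      · rw [hQpow n, hcK n]; exact zero_mem _
      · rw [hQe n, zero_mul]; exact zero_mem _
    | zero => rw [mul_zero, zero_mul]; exact zero_mem _
    | add y z hy hz ihy ihz => rw [mul_add, add_mul]; exact add_mem ihy ihz
    | smul r z hz ih => rw [mul_smul_comm, smul_mul_assoc]; exact Submodule.smul_mem _ _ ih
  obtain ⟨c, hc⟩ := Finsupp.mem_span_range_iff_exists_finsupp.mp hξV
  have hξs : ξ = ∑ m ∈ c.support, c m • ((star x * x) ^ m * star x) := by
    rw [← hc]; rfl
  have hsaφ : ∀ z : S.A, star z = z → (starRingEnd ℂ) (S.φ z) = S.φ z := by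
    intro z h; rw [← S.phi_star, h]
  have hρl : ((ρ l : ℝ) : ℂ) ≠ 0 := by
    exact_mod_cast (S.ρ_pos l).ne'
  have hsacpw : ∀ n : ℕ, star (cpow (star x * x) (S.p l) n) = cpow (star x * x) (S.p l) n := by
    intro n; cases n with
    | zero => simp only [cpow]; exact S.p_sa l
    | succ n => simp only [cpow]; rw [star_pow, star_mul, star_star]
  have hsacpv : ∀ n : ℕ, star (cpow (x * star x) (S.p k) n) = cpow (x * star x) (S.p k) n := by
    intro n; cases n with
    | zero => simp only [cpow]; exact S.p_sa k
    | succ n => simp only [cpow]; rw [star_pow, star_mul, star_star]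
  have hsaw : ∀ j : ℕ, star ((star x * x) ^ j) = (star x * x) ^ j := by
    intro j; rw [star_pow, star_mul, star_star]
  -- reality of the left-hand sides of the conjugate relations
  have hFreal : ∀ n : ℕ, (starRingEnd ℂ) (S.φ (ξ * x * cpow (star x * x) (S.p l) n))
      = S.φ (ξ * x * cpow (star x * x) (S.p l) n) := by
    intro n
    have h := hconj n
    have h2 : (starRingEnd ℂ) (S.φ (ξ * x * cpow (star x * x) (S.p l) n) / ((ρ l : ℝ) : ℂ))
        = S.φ (ξ * x * cpow (star x * x) (S.p l) n) / ((ρ l : ℝ) : ℂ) := by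
      rw [h, map_sum]
      refine Finset.sum_congr rfl fun i _ => ?_
      rw [map_mul, map_div₀, map_div₀, hsaφ _ (hsacpv i), hsaφ _ (hsacpw (n - i)),
        Complex.conj_ofReal, Complex.conj_ofReal]
    rw [map_div₀, Complex.conj_ofReal] at h2
    rw [div_eq_div_iff hρl hρl] at h2
    exact mul_right_cancel₀ hρl h2
  -- powers against cpow
  have hcp : ∀ m n : ℕ, (star x * x) ^ (m + 1) * cpow (star x * x) (S.p l) n
      = (star x * x) ^ (m + n + 1) := by
    intro m n; cases n with
    | zero => simp only [cpow, Nat.add_zero]; exact hpowQ m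
    | succ n =>
      simp only [cpow]
      rw [← pow_add, show m + 1 + (n + 1) = m + (n + 1) + 1 by omega]
  -- expansion of the conjugate-relation left-hand sides
  have hFn : ∀ n : ℕ, S.φ (ξ * x * cpow (star x * x) (S.p l) n)
      = ∑ m ∈ c.support, c m * S.φ ((star x * x) ^ (m + n + 1)) := by
    intro n
    conv_lhs => rw [hξs]
    rw [Finset.sum_mul, Finset.sum_mul, map_sum]
    refine Finset.sum_congr rfl fun m _ => ?_
    rw [smul_mul_assoc, smul_mul_assoc, map_smul, smul_eq_mul]
    congr 2
    rw [mul_assoc ((star x * x) ^ m) (star x) x, ← pow_succ, hcp m n]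
  -- the key linear relations
  have hrel : ∀ n : ℕ, ∑ m ∈ c.support,
      (c m - (starRingEnd ℂ) (c m)) * S.φ ((star x * x) ^ (m + n + 1)) = 0 := by
    intro n
    have h1 := hFreal n
    rw [hFn n, map_sum] at h1
    calc ∑ m ∈ c.support, (c m - (starRingEnd ℂ) (c m)) * S.φ ((star x * x) ^ (m + n + 1))
        = ∑ m ∈ c.support, (c m * S.φ ((star x * x) ^ (m + n + 1))
            - (starRingEnd ℂ) (c m) * S.φ ((star x * x) ^ (m + n + 1))) := by
          refine Finset.sum_congr rfl fun m _ => ?_; ring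
      _ = ∑ m ∈ c.support, c m * S.φ ((star x * x) ^ (m + n + 1))
            - ∑ m ∈ c.support, (starRingEnd ℂ) (c m) * S.φ ((star x * x) ^ (m + n + 1)) :=
          Finset.sum_sub_distrib _ _
      _ = 0 := by
          rw [← h1]
          rw [sub_eq_zero]
          refine Finset.sum_congr rfl fun m _ => ?_
          rw [map_mul, hsaφ _ (hsaw (m + n + 1))]
  -- expansions of x ξ and ξ* x*
  have hva : ∀ m : ℕ, x * ((star x * x) ^ m * star x) = (x * star x) ^ (m + 1) := by
    intro m; rw [← mul_assoc, hcomm m, mul_assoc, ← pow_succ]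
  have hxξ : x * ξ = ∑ m ∈ c.support, c m • (x * star x) ^ (m + 1) := by
    conv_lhs => rw [hξs]
    rw [Finset.mul_sum]
    refine Finset.sum_congr rfl fun m _ => ?_
    rw [mul_smul_comm, hva m]
  have hstarξ : star ξ * star x
      = ∑ m ∈ c.support, (starRingEnd ℂ) (c m) • (x * star x) ^ (m + 1) := by
    conv_lhs => rw [hξs]
    rw [star_sum, Finset.sum_mul]
    refine Finset.sum_congr rfl fun m _ => ?_
    rw [star_smul, smul_mul_assoc]
    rw [star_mul, star_star, hsaw m, hcomm m, mul_assoc, ← pow_succ]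
    rfl
  have hy : x * ξ - star ξ * star x
      = ∑ m ∈ c.support, (c m - (starRingEnd ℂ) (c m)) • (x * star x) ^ (m + 1) := by
    rw [hxξ, hstarξ, ← Finset.sum_sub_distrib]
    exact Finset.sum_congr rfl fun m _ => (sub_smul _ _ _).symm
  have hysa : star (x * ξ - star ξ * star x) = -(x * ξ - star ξ * star x) := by
    rw [star_sub, star_mul, star_mul, star_star, star_star, neg_sub]
  have htr : ∀ j : ℕ, S.φ ((x * star x) ^ (j + 1)) = S.φ ((star x * x) ^ (j + 1)) := by
    intro j
    have h1 : (x * star x) ^ (j + 1) = x * ((star x * x) ^ j * star x) := by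
      rw [← mul_assoc, hcomm j, mul_assoc, ← pow_succ]
    rw [h1, S.φ_trace]
    congr 1
    rw [mul_assoc, ← pow_succ]
  have inner : ∀ m : ℕ, ∑ m' ∈ c.support,
      (c m' - (starRingEnd ℂ) (c m')) * S.φ ((star x * x) ^ (m + m' + 1 + 1)) = 0 := by
    intro m
    refine Eq.trans (Finset.sum_congr rfl fun m' _ => ?_) (hrel (m + 1))
    rw [show m + m' + 1 + 1 = m' + (m + 1) + 1 by omega]
  have hyy : S.φ ((x * ξ - star ξ * star x) * (x * ξ - star ξ * star x)) = 0 := by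
    rw [hy, Finset.sum_mul_sum, map_sum]
    refine Finset.sum_eq_zero fun m _ => ?_
    rw [map_sum]
    calc ∑ m' ∈ c.support, S.φ ((c m - (starRingEnd ℂ) (c m)) • (x * star x) ^ (m + 1)
          * ((c m' - (starRingEnd ℂ) (c m')) • (x * star x) ^ (m' + 1)))
        = ∑ m' ∈ c.support, (c m - (starRingEnd ℂ) (c m)) *
            ((c m' - (starRingEnd ℂ) (c m')) * S.φ ((star x * x) ^ (m + m' + 1 + 1))) := by
          refine Finset.sum_congr rfl fun m' _ => ?_
          rw [smul_mul_smul_comm, j_ee m m', map_smul, smul_eq_mul, htr (m + m' + 1), mul_assoc]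
      _ = (c m - (starRingEnd ℂ) (c m)) * ∑ m' ∈ c.support,
            (c m' - (starRingEnd ℂ) (c m')) * S.φ ((star x * x) ^ (m + m' + 1 + 1)) :=
          (Finset.mul_sum _ _ _).symm
      _ = 0 := by rw [inner m, mul_zero]
  have h0 : S.φ (star (x * ξ - star ξ * star x) * (x * ξ - star ξ * star x)) = 0 := by
    rw [hysa, neg_mul, map_neg, hyy, neg_zero]
  exact sub_eq_zero.mp (hfaith _ h0)
end
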